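/- arXiv:2211.15353 — 2 statements merged into one kernel-verified Lean document; each statement's English description precedes it below -/
import Mathlib

section
/- Let X be a random vector in ℝ^m and Y a random vector in ℝ^n, defined on a common probability space, such that each marginal cdf F_i of X_i (i = 1,…,m) and G_j of Y_j (j = 1,…,n) is continuous and strictly increasing with range (0,1). Let U = (F_1(X_1), …, F_m(X_m)) and V = (G_1(Y_1), …, G_n(Y_n)) be the pseudo-observation vectors. Then the Kullback–Leibler divergence of the joint law of (X, Y) from the product of the laws of X and Y equals the Kullback–Leibler divergence of the joint law of (U, V) from the product of the laws of U and V; i.e., the mutual information satisfies I(X;Y) = D_KL(law(U,V) ‖ law(U) ⊗ law(V)). -/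
/-!
The pseudo-observations arise from `(X, Y)` through the map `(x, y) ↦ (F x, G y)`, a product of
two measurable embeddings: strictly increasing componentwise transforms are measurable and
injective on the standard Borel space `ℝ^k`. A measurable embedding transports Radon–Nikodym
derivatives, so the Kullback–Leibler divergence is invariant under it, and `law(U, V)`,
`law U ⊗ law V` are the pushforwards of `law(X, Y)`, `law X ⊗ law Y` under the same embedding.
-/

open MeasureTheory Set ENNReal Classical

/-- The Kullback–Leibler divergence `D_KL(μ‖ν) = ∫ log (dμ/dν) dμ` (in nats),
with value `∞` when `μ` is not absolutely continuous w.r.t. `ν` or the integral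
does not exist. -/
noncomputable def klDiv {α : Type*} [MeasurableSpace α] (μ ν : Measure α) : ℝ≥0∞ :=
  if μ ≪ ν ∧ Integrable (fun x => Real.log (μ.rnDeriv ν x).toReal) μ
  then ENNReal.ofReal (∫ x, Real.log (μ.rnDeriv ν x).toReal ∂μ)
  else ⊤

lemma MeasurableEmbedding.map_absolutelyContinuous_map_iff {α β : Type*} [MeasurableSpace α]
    [MeasurableSpace β] {f : α → β} (hf : MeasurableEmbedding f) {μ ν : Measure α} :
    μ.map f ≪ ν.map f ↔ μ ≪ ν := by
  refine ⟨fun h s hνs => ?_, hf.absolutelyContinuous_map⟩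
  have hμ := h (s := f '' s) (by rwa [hf.map_apply, hf.injective.preimage_image])
  rwa [hf.map_apply, hf.injective.preimage_image] at hμ

lemma klDiv_map_of_measurableEmbedding {α β : Type*} [MeasurableSpace α] [MeasurableSpace β]
    {f : α → β} (hf : MeasurableEmbedding f) (μ ν : Measure α) [SigmaFinite μ] [SigmaFinite ν] :
    klDiv (μ.map f) (ν.map f) = klDiv μ ν := by
  by_cases hμν : μ ≪ ν
  swap
  · simp only [klDiv, hf.map_absolutelyContinuous_map_iff, hμν, false_and, if_false]
  have hlog : (fun x => Real.log ((μ.map f).rnDeriv (ν.map f) (f x)).toReal)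
      =ᵐ[μ] fun x => Real.log (μ.rnDeriv ν x).toReal := by
    filter_upwards [hμν.ae_le (hf.rnDeriv_map μ ν)] with x hx
    rw [hx]
  have hint : Integrable (fun y => Real.log ((μ.map f).rnDeriv (ν.map f) y).toReal) (μ.map f) ↔
      Integrable (fun x => Real.log (μ.rnDeriv ν x).toReal) μ :=
    hf.integrable_map_iff.trans (integrable_congr hlog)
  simp only [klDiv, hf.map_absolutelyContinuous_map_iff, hint, hf.integral_map,
    integral_congr_ae hlog]

lemma klDiv_map_pair_comp_of_measurableEmbedding {Ω α β γ δ : Type*} [MeasurableSpace Ω]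
    [MeasurableSpace α] [MeasurableSpace β] [MeasurableSpace γ] [MeasurableSpace δ]
    (P : Measure Ω) [IsFiniteMeasure P] {X : Ω → α} {Y : Ω → β} (hX : Measurable X)
    (hY : Measurable Y) {f : α → γ} {g : β → δ} (hf : MeasurableEmbedding f)
    (hg : MeasurableEmbedding g) :
    klDiv (P.map fun ω => (f (X ω), g (Y ω))) ((P.map (f ∘ X)).prod (P.map (g ∘ Y)))
      = klDiv (P.map fun ω => (X ω, Y ω)) ((P.map X).prod (P.map Y)) := by
  rw [← Measure.map_map hf.measurable hX, ← Measure.map_map hg.measurable hY,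
    Measure.map_prod_map _ _ hf.measurable hg.measurable,
    show (fun ω => (f (X ω), g (Y ω))) = Prod.map f g ∘ fun ω => (X ω, Y ω) from rfl,
    ← Measure.map_map (hf.prodMap hg).measurable (hX.prodMk hY),
    klDiv_map_of_measurableEmbedding (hf.prodMap hg)]

lemma measurableEmbedding_pi_map_of_strictMono {ι : Type*} [Countable ι] {f : ι → ℝ → ℝ}
    (hf : ∀ i, StrictMono (f i)) : MeasurableEmbedding fun (x : ι → ℝ) i => f i (x i) :=
  Measurable.measurableEmbedding
    (measurable_pi_lambda _ fun i => (hf i).monotone.measurable.comp (measurable_pi_apply i))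
    fun _ _ h => funext fun i => (hf i).injective (congrFun h i)

theorem mutual_information_eq_copula_kl_general
    {Ω : Type*} [MeasurableSpace Ω] (P : Measure Ω) [IsProbabilityMeasure P]
    (m n : ℕ)
    (X : Ω → Fin m → ℝ) (Y : Ω → Fin n → ℝ)
    (hX_meas : Measurable X) (hY_meas : Measurable Y)
    (F : Fin m → ℝ → ℝ) (G : Fin n → ℝ → ℝ)
    (hF_mono : ∀ i, StrictMono (F i))
    (hG_mono : ∀ j, StrictMono (G j))
    (U : Ω → Fin m → ℝ) (V : Ω → Fin n → ℝ)
    (hU : ∀ ω i, U ω i = F i (X ω i)) (hV : ∀ ω j, V ω j = G j (Y ω j)) :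
    klDiv (P.map (fun ω => (X ω, Y ω))) ((P.map X).prod (P.map Y))
      = klDiv (P.map (fun ω => (U ω, V ω))) ((P.map U).prod (P.map V)) := by
  obtain rfl : U = fun ω i => F i (X ω i) := funext fun ω => funext (hU ω)
  obtain rfl : V = fun ω j => G j (Y ω j) := funext fun ω => funext (hV ω)
  exact (klDiv_map_pair_comp_of_measurableEmbedding P hX_meas hY_meas
    (measurableEmbedding_pi_map_of_strictMono hF_mono)
    (measurableEmbedding_pi_map_of_strictMono hG_mono)).symm

/-- **Mutual information via copulas** (equation (18) of the paper): if `X ∈ ℝ^m` and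
`Y ∈ ℝ^n` have continuous strictly increasing marginal cdfs `F i`, `G j` of range `(0,1)`,
and `U = (F 1 (X 1), …, F m (X m))`, `V = (G 1 (Y 1), …, G n (Y n))` are the
pseudo-observation vectors, then
`I(X;Y) = D_KL(law(X,Y) ‖ law X ⊗ law Y) = D_KL(law(U,V) ‖ law U ⊗ law V)`. -/
theorem mutual_information_eq_copula_kl
    {Ω : Type*} [MeasurableSpace Ω] (P : Measure Ω) [IsProbabilityMeasure P]
    (m n : ℕ) (hm : 1 ≤ m) (hn : 1 ≤ n)
    (X : Ω → Fin m → ℝ) (Y : Ω → Fin n → ℝ)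
    (hX_meas : Measurable X) (hY_meas : Measurable Y)
    (F : Fin m → ℝ → ℝ) (G : Fin n → ℝ → ℝ)
    (hF_cdf : ∀ i t, F i t = (P {ω | X ω i ≤ t}).toReal)
    (hG_cdf : ∀ j t, G j t = (P {ω | Y ω j ≤ t}).toReal)
    (hF_cont : ∀ i, Continuous (F i)) (hF_mono : ∀ i, StrictMono (F i))
    (hF_range : ∀ i, Set.range (F i) = Ioo (0 : ℝ) 1)
    (hG_cont : ∀ j, Continuous (G j)) (hG_mono : ∀ j, StrictMono (G j))
    (hG_range : ∀ j, Set.range (G j) = Ioo (0 : ℝ) 1)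
    (U : Ω → Fin m → ℝ) (V : Ω → Fin n → ℝ)
    (hU : ∀ ω i, U ω i = F i (X ω i)) (hV : ∀ ω j, V ω j = G j (Y ω j)) :
    klDiv (P.map (fun ω => (X ω, Y ω))) ((P.map X).prod (P.map Y))
      = klDiv (P.map (fun ω => (U ω, V ω))) ((P.map U).prod (P.map V)) :=
  mutual_information_eq_copula_kl_general P m n X Y hX_meas hY_meas F G hF_mono hG_mono U V hU hV
end

section
/- For every t < 0, the function g(u) = t·u − ( u·log u − (u+1)·log(u+1) ) defined on (0, ∞) attains its supremum, and sup_{u > 0} ( t·u − u·log u + (u+1)·log(u+1) ) = −log(1 − e^t), attained at u = e^t/(1 − e^t). -/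
open Set

/-- **Convex conjugate of the GAN generator** (Table I of the paper): for every `t < 0`,
`sup_{u > 0} (t·u − u·log u + (u+1)·log(u+1)) = −log(1 − e^t)`, and the supremum is
attained at `u = e^t/(1 − e^t)`. -/
theorem gan_generator_conjugate (t : ℝ) (ht : t < 0) :
    IsGreatest
        ((fun u => t * u - u * Real.log u + (u + 1) * Real.log (u + 1)) '' Ioi (0 : ℝ))
        (-Real.log (1 - Real.exp t))
      ∧ (t * (Real.exp t / (1 - Real.exp t))
          - (Real.exp t / (1 - Real.exp t)) * Real.log (Real.exp t / (1 - Real.exp t))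
          + (Real.exp t / (1 - Real.exp t) + 1)
              * Real.log (Real.exp t / (1 - Real.exp t) + 1))
          = -Real.log (1 - Real.exp t) := by
  have hEpos : 0 < Real.exp t := Real.exp_pos t
  have hE1 : Real.exp t < 1 := by
    have := Real.exp_lt_exp.mpr ht
    simpa using this
  set E := Real.exp t with hEdef
  have h1E : 0 < 1 - E := by linarith
  have hu : (0:ℝ) < E / (1 - E) := div_pos hEpos h1E
  have hlogu : Real.log (E / (1 - E)) = t - Real.log (1 - E) := by
    rw [Real.log_div (ne_of_gt hEpos) (ne_of_gt h1E), hEdef, Real.log_exp]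
  have hsum : E / (1 - E) + 1 = 1 / (1 - E) := by field_simp; ring
  have hlogu1 : Real.log (E / (1 - E) + 1) = - Real.log (1 - E) := by
    rw [hsum, Real.log_div one_ne_zero (ne_of_gt h1E), Real.log_one]; ring
  have heq : t * (E / (1 - E)) - (E / (1 - E)) * Real.log (E / (1 - E))
      + (E / (1 - E) + 1) * Real.log (E / (1 - E) + 1) = -Real.log (1 - E) := by
    rw [hlogu, hlogu1]; ring
  refine ⟨⟨⟨E / (1 - E), hu, heq⟩, ?_⟩, heq⟩
  rintro y ⟨u, hu0, rfl⟩
  simp only [mem_Ioi] at hu0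
  have hupos1 : (0:ℝ) < u + 1 := by linarith
  have key1 : Real.log (E * (u + 1) / u) ≤ E * (u + 1) / u - 1 :=
    Real.log_le_sub_one_of_pos (by positivity)
  have hlog1 : Real.log (E * (u + 1) / u) = t + Real.log (u + 1) - Real.log u := by
    rw [Real.log_div (by positivity) (ne_of_gt hu0),
      Real.log_mul (ne_of_gt hEpos) (ne_of_gt hupos1), hEdef, Real.log_exp]
  have key2 : Real.log ((u + 1) * (1 - E)) ≤ (u + 1) * (1 - E) - 1 :=
    Real.log_le_sub_one_of_pos (by positivity)
  have hlog2 : Real.log ((u + 1) * (1 - E)) = Real.log (u + 1) + Real.log (1 - E) :=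
    Real.log_mul (ne_of_gt hupos1) (ne_of_gt h1E)
  have k1 : u * (t + Real.log (u + 1) - Real.log u) ≤ E * (u + 1) - u := by
    calc u * (t + Real.log (u + 1) - Real.log u)
        = u * Real.log (E * (u + 1) / u) := by rw [hlog1]
      _ ≤ u * (E * (u + 1) / u - 1) := mul_le_mul_of_nonneg_left key1 hu0.le
      _ = E * (u + 1) - u := by field_simp
  rw [hlog2] at key2
  simp only
  nlinarith [k1, key2]
end
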